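/- For every t ≥ 0, every finite sequence k₁,…,k_t ∈ {0,…,M−1}, and every ℓ ∈ {0,…,M}: Σ_{j=ℓ}^{M} (P_{k_t} ⋯ P_{k_1} v₀)_j ≤ q^ℓ. (This is the quantitative core of the Geometric Stochastic Domination theorem: the law obtained by applying any sequence of updates to the point mass at 0 has geometric tails, so the number of third-class particles to the right of the second-class particle is stochastically dominated by a Geometric(q) random variable.) -/

import Mathlib

open Matrix

/-- The vector `v_j ∈ ℝ^{M+1}`: the law of `min(j, G)` for `G ~ Geo(q)`. -/
noncomputable def sixV (q : ℝ) (M : ℕ) (j : Fin (M + 1)) : Fin (M + 1) → ℝ :=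
  fun k =>
    if (k : ℕ) < (j : ℕ) then (1 - q) * q ^ (k : ℕ)
    else if (k : ℕ) = (j : ℕ) then q ^ (j : ℕ)
    else 0

/-- The update matrix `P_k`, equal to the identity except in rows/columns `k, k+1`. -/
noncomputable def sixP (b₁ b₂ : ℝ) (M : ℕ) (k : Fin M) :
    Matrix (Fin (M + 1)) (Fin (M + 1)) ℝ :=
  fun i j =>
    if i = k.castSucc ∧ j = k.castSucc then 1 - b₁
    else if i = k.castSucc ∧ j = k.succ then b₂
    else if i = k.succ ∧ j = k.castSucc then b₁
    else if i = k.succ ∧ j = k.succ then 1 - b₂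
    else if i = j then 1 else 0

/-!
The convex hull of `v_0, …, v_M` is invariant under every `P_k`. Indeed `P_k` only mixes the
coordinates `k` and `k + 1` and fixes every `w` with `b₁ w_k = b₂ w_{k+1}`; since `q b₂ = b₁`, this
detailed balance holds for `v_j` with `j ∉ {k, k + 1}`, while `P_k` maps `v_k` and `v_{k+1}` into
the segment between them. The tail `∑_{i ≥ ℓ} w_i` is linear in `w` and equals `q^ℓ` or `0` at each
`v_j`, so it is at most `q^ℓ` on the hull, which contains `P_{k_t} ⋯ P_{k_1} v_0`.
-/

lemma LinearMap.mapsTo_convexHull {𝕜 E F : Type*} [Ring 𝕜] [PartialOrder 𝕜] [AddCommGroup E]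
    [Module 𝕜 E] [AddCommGroup F] [Module 𝕜 F] {f : E →ₗ[𝕜] F} {s : Set E} {t : Set F}
    (h : Set.MapsTo f s (convexHull 𝕜 t)) : Set.MapsTo f (convexHull 𝕜 s) (convexHull 𝕜 t) := by
  rw [Set.mapsTo_iff_image_subset, f.image_convexHull]
  exact convexHull_min h.image_subset (convex_convexHull 𝕜 t)

lemma Matrix.mapsTo_list_prod_mulVec {n R : Type*} [Fintype n] [DecidableEq n] [CommSemiring R]
    {As : List (Matrix n n R)} {S : Set (n → R)} (h : ∀ A ∈ As, Set.MapsTo (A *ᵥ ·) S S) :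
    Set.MapsTo (As.prod *ᵥ ·) S S := by
  induction As with
  | nil => simp only [List.prod_nil, one_mulVec]; exact Set.mapsTo_id S
  | cons A As ih =>
    simp only [List.prod_cons, ← mulVec_mulVec]
    exact (h A List.mem_cons_self).comp (ih fun B hB => h B (List.mem_cons_of_mem A hB))

section Update

variable {b₁ b₂ : ℝ} {M : ℕ} (k : Fin M)

lemma sixP_mulVec_apply (w : Fin (M + 1) → ℝ) (x : Fin (M + 1)) :
    (sixP b₁ b₂ M k *ᵥ w) x =
      if x = k.castSucc then (1 - b₁) * w k.castSucc + b₂ * w k.succ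
      else if x = k.succ then b₁ * w k.castSucc + (1 - b₂) * w k.succ
      else w x := by
  have hne : k.castSucc ≠ k.succ := Fin.castSucc_lt_succ.ne
  simp only [mulVec, dotProduct]
  split_ifs with h₁ h₂
  · subst h₁
    rw [Fintype.sum_eq_add _ _ hne fun y hy => by simp [sixP, hy.1, hy.2, Ne.symm hy.1]]
    simp [sixP, hne.symm]
  · subst h₂
    rw [Fintype.sum_eq_add _ _ hne fun y hy => by simp [sixP, hy.1, hy.2, Ne.symm hy.2]]
    simp [sixP, hne.symm]
  · rw [Fintype.sum_eq_single x fun y hy => by simp [sixP, h₁, h₂, Ne.symm hy]]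
    simp [sixP, h₁, h₂]

lemma sixP_mulVec_eq_self {w : Fin (M + 1) → ℝ} (hw : b₁ * w k.castSucc = b₂ * w k.succ) :
    sixP b₁ b₂ M k *ᵥ w = w := by
  ext x
  rw [sixP_mulVec_apply]
  split_ifs with h₁ h₂
  · subst h₁; linarith
  · subst h₂; linarith
  · rfl

end Update

section Geometric

variable {q : ℝ} {M : ℕ}

lemma sixV_apply_of_lt {j x : Fin (M + 1)} (h : x < j) : sixV q M j x = (1 - q) * q ^ (x : ℕ) :=
  if_pos h

lemma sixV_apply_self (j : Fin (M + 1)) : sixV q M j j = q ^ (j : ℕ) := by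
  simp [sixV]

lemma sixV_apply_of_gt {j x : Fin (M + 1)} (h : j < x) : sixV q M j x = 0 := by
  simp [sixV, Fin.val_ne_of_ne h.ne', not_lt_of_gt (Fin.lt_def.mp h)]

lemma sixV_castSucc_apply_eq_succ_apply {k : Fin M} {x : Fin (M + 1)} (h₁ : x ≠ k.castSucc)
    (h₂ : x ≠ k.succ) : sixV q M k.castSucc x = sixV q M k.succ x := by
  rcases lt_or_gt_of_ne h₁ with hlt | hgt
  · rw [sixV_apply_of_lt hlt, sixV_apply_of_lt (hlt.trans Fin.castSucc_lt_succ)]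
  · rw [sixV_apply_of_gt hgt,
      sixV_apply_of_gt ((Fin.castSucc_lt_iff_succ_le.mp hgt).lt_of_ne' h₂)]

lemma sixV_tail_sum (ℓ j : Fin (M + 1)) :
    ∑ x ∈ Finset.univ.filter (fun x => ℓ ≤ x), sixV q M j x = if ℓ ≤ j then q ^ (ℓ : ℕ) else 0 := by
  have hsupp : ∑ x ∈ Finset.univ.filter (fun x => ℓ ≤ x), sixV q M j x =
      ∑ x ∈ Finset.Icc ℓ j, sixV q M j x := by
    refine (Finset.sum_subset (fun x hx => ?_) fun x hx hxj => ?_).symm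
    · simp [(Finset.mem_Icc.mp hx).1]
    · simp only [Finset.mem_filter, Finset.mem_univ, true_and, Finset.mem_Icc, not_and,
        not_le] at hx hxj
      exact sixV_apply_of_gt (hxj hx)
  rw [hsupp]
  split_ifs with hℓj
  · have hgeom : ∑ x ∈ Finset.Ico ℓ j, sixV q M j x = q ^ (ℓ : ℕ) - q ^ (j : ℕ) := by
      rw [Finset.sum_congr rfl fun x hx => sixV_apply_of_lt (Finset.mem_Ico.mp hx).2,
        ← Finset.mul_sum]
      have hval : ∑ x ∈ Finset.Ico ℓ j, q ^ (x : ℕ) = ∑ n ∈ Finset.Ico (ℓ : ℕ) j, q ^ n := by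
        rw [← Fin.map_valEmbedding_Ico, Finset.sum_map]
        rfl
      rw [hval, mul_comm, geom_sum_Ico_mul_neg _ hℓj]
    rw [Finset.Icc_eq_cons_Ico hℓj, Finset.sum_cons, sixV_apply_self, hgeom]
    ring
  · rw [Finset.Icc_eq_empty hℓj, Finset.sum_empty]

lemma tail_sum_le_of_mem_convexHull_sixV (hq : 0 ≤ q) (ℓ : Fin (M + 1)) {w : Fin (M + 1) → ℝ}
    (hw : w ∈ convexHull ℝ (Set.range (sixV q M))) :
    ∑ j ∈ Finset.univ.filter (fun j => ℓ ≤ j), w j ≤ q ^ (ℓ : ℕ) := by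
  refine convexHull_min ?_ (convex_halfSpace_le ⟨fun _ _ => Finset.sum_add_distrib,
    fun _ _ => (Finset.mul_sum _ _ _).symm⟩ _) hw
  rintro _ ⟨i, rfl⟩
  show ∑ x ∈ _, sixV q M i x ≤ _
  rw [sixV_tail_sum]
  split_ifs
  exacts [le_rfl, by positivity]

variable (k : Fin M)

lemma sixV_castSucc_apply_castSucc : sixV q M k.castSucc k.castSucc = q ^ (k : ℕ) :=
  sixV_apply_self _

lemma sixV_castSucc_apply_succ : sixV q M k.castSucc k.succ = 0 :=
  sixV_apply_of_gt Fin.castSucc_lt_succ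

lemma sixV_succ_apply_castSucc : sixV q M k.succ k.castSucc = (1 - q) * q ^ (k : ℕ) :=
  sixV_apply_of_lt Fin.castSucc_lt_succ

lemma sixV_succ_apply_succ : sixV q M k.succ k.succ = q ^ ((k : ℕ) + 1) :=
  sixV_apply_self _

variable {b₁ b₂ : ℝ}

lemma sixP_mulVec_sixV_castSucc (hq : q * b₂ = b₁) :
    sixP b₁ b₂ M k *ᵥ sixV q M k.castSucc =
      (1 - b₂) • sixV q M k.castSucc + b₂ • sixV q M k.succ := by
  ext x
  rw [sixP_mulVec_apply]
  simp only [Pi.add_apply, Pi.smul_apply, smul_eq_mul]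
  split_ifs with h₁ h₂
  · subst h₁ hq
    rw [sixV_castSucc_apply_castSucc, sixV_castSucc_apply_succ, sixV_succ_apply_castSucc]
    ring
  · subst h₂ hq
    rw [sixV_castSucc_apply_castSucc, sixV_castSucc_apply_succ, sixV_succ_apply_succ]
    ring
  · rw [sixV_castSucc_apply_eq_succ_apply h₁ h₂]
    ring

lemma sixP_mulVec_sixV_succ (hq : q * b₂ = b₁) :
    sixP b₁ b₂ M k *ᵥ sixV q M k.succ = b₁ • sixV q M k.castSucc + (1 - b₁) • sixV q M k.succ := by
  ext x
  rw [sixP_mulVec_apply]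
  simp only [Pi.add_apply, Pi.smul_apply, smul_eq_mul]
  split_ifs with h₁ h₂
  · subst h₁ hq
    rw [sixV_succ_apply_castSucc, sixV_succ_apply_succ, sixV_castSucc_apply_castSucc]
    ring
  · subst h₂ hq
    rw [sixV_succ_apply_castSucc, sixV_succ_apply_succ, sixV_castSucc_apply_succ]
    ring
  · rw [sixV_castSucc_apply_eq_succ_apply h₁ h₂]
    ring

lemma sixP_mulVec_sixV_of_ne (hq : q * b₂ = b₁) {j : Fin (M + 1)} (h₁ : j ≠ k.castSucc)
    (h₂ : j ≠ k.succ) : sixP b₁ b₂ M k *ᵥ sixV q M j = sixV q M j := by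
  apply sixP_mulVec_eq_self
  rcases lt_or_gt_of_ne h₁ with hlt | hgt
  · rw [sixV_apply_of_gt hlt, sixV_apply_of_gt (hlt.trans Fin.castSucc_lt_succ)]
    ring
  · rw [sixV_apply_of_lt hgt,
      sixV_apply_of_lt ((Fin.castSucc_lt_iff_succ_le.mp hgt).lt_of_ne' h₂), ← hq]
    simp only [Fin.val_succ, Fin.val_castSucc]
    ring

lemma mapsTo_sixP_convexHull_sixV (hq : q * b₂ = b₁) (hb₁ : 0 ≤ b₁) (hb₁' : b₁ ≤ 1)
    (hb₂ : 0 ≤ b₂) (hb₂' : b₂ ≤ 1) :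
    Set.MapsTo (sixP b₁ b₂ M k *ᵥ ·) (convexHull ℝ (Set.range (sixV q M)))
      (convexHull ℝ (Set.range (sixV q M))) := by
  refine (sixP b₁ b₂ M k).mulVecLin.mapsTo_convexHull ?_
  rintro _ ⟨j, rfl⟩
  have hseg := segment_subset_convexHull (𝕜 := ℝ) (Set.mem_range_self k.castSucc)
    (Set.mem_range_self (f := sixV q M) k.succ)
  by_cases h₁ : j = k.castSucc
  · subst h₁
    rw [mulVecLin_apply, sixP_mulVec_sixV_castSucc k hq]
    exact hseg ⟨1 - b₂, b₂, by linarith, hb₂, by ring, rfl⟩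
  by_cases h₂ : j = k.succ
  · subst h₂
    rw [mulVecLin_apply, sixP_mulVec_sixV_succ k hq]
    exact hseg ⟨b₁, 1 - b₁, hb₁, by linarith, by ring, rfl⟩
  rw [mulVecLin_apply, sixP_mulVec_sixV_of_ne k hq h₁ h₂]
  exact subset_convexHull ℝ _ (Set.mem_range_self j)

end Geometric

theorem stmt3_general (b₁ b₂ q : ℝ) (hb₁ : 0 < b₁) (hb₁₂ : b₁ < b₂) (hb₂ : b₂ < 1)
    (hq : q = b₁ / b₂) (M : ℕ) (ks : List (Fin M)) (ℓ : Fin (M + 1)) :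
    ∑ j ∈ Finset.univ.filter (fun j => ℓ ≤ j),
        ((ks.map (sixP b₁ b₂ M)).prod.mulVec (sixV q M 0)) j ≤ q ^ (ℓ : ℕ) := by
  have hb₂₀ : 0 < b₂ := hb₁.trans hb₁₂
  have hqb : q * b₂ = b₁ := by rw [hq]; field_simp
  have hq₀ : 0 ≤ q := by rw [hq]; positivity
  refine tail_sum_le_of_mem_convexHull_sixV hq₀ ℓ <| Matrix.mapsTo_list_prod_mulVec
    (fun A hA => ?_) (subset_convexHull ℝ _ (Set.mem_range_self 0))
  obtain ⟨k, -, rfl⟩ := List.mem_map.mp hA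
  exact mapsTo_sixP_convexHull_sixV k hqb hb₁.le (by linarith) hb₂₀.le hb₂.le

/-- Geometric stochastic domination: the law obtained by applying any sequence of
updates to the point mass at `0` has geometric tails. -/
theorem stmt3 (b₁ b₂ q : ℝ) (hb₁ : 0 < b₁) (hb₁₂ : b₁ < b₂) (hb₂ : b₂ < 1)
    (hq : q = b₁ / b₂) (M : ℕ) (hM : 1 ≤ M) (ks : List (Fin M)) (ℓ : Fin (M + 1)) :
    ∑ j ∈ Finset.univ.filter (fun j => ℓ ≤ j),
        ((ks.map (sixP b₁ b₂ M)).prod.mulVec (sixV q M 0)) j ≤ q ^ (ℓ : ℕ) :=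
  stmt3_general b₁ b₂ q hb₁ hb₁₂ hb₂ hq M ks ℓ
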